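/- Euler's q-identity: for |q| < 1 and all complex z, ∑_{j≥0} q^{C(j,2)} z^j / ((1-q)(1-q²)⋯(1-q^j)) = ∏_{k≥0} (1 + q^k z), where C(j,2) = j(j-1)/2. -/

import Mathlib

/-!
With `a_j = q^{C(j,2)} / ((1-q)⋯(1-q^j))` one has `a_{j+1} (1 - q^{j+1}) = a_j q^j`, which says
exactly that the entire function `S(w) = ∑ a_j w^j` satisfies `S(w) = (1 + w) S(qw)`. Iterating,
`S(z) = (∏_{k<n} (1 + q^k z)) S(q^n z)`, and `S(q^n z) → S(0) = 1` as `n → ∞`.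
-/

open Filter Topology

namespace EulerQ

variable {q : ℂ}

noncomputable def coeff (q : ℂ) (j : ℕ) : ℂ :=
  q ^ j.choose 2 / ∏ i ∈ Finset.range j, (1 - q ^ (i + 1))

noncomputable def series (q w : ℂ) : ℂ :=
  ∑' j, coeff q j * w ^ j

lemma one_sub_norm_le_norm_one_sub_pow_succ (hq : ‖q‖ < 1) (i : ℕ) :
    1 - ‖q‖ ≤ ‖1 - q ^ (i + 1)‖ :=
  calc 1 - ‖q‖ ≤ 1 - ‖q‖ ^ (i + 1) := by
        gcongr; exact pow_le_of_le_one (norm_nonneg q) hq.le i.succ_ne_zero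
    _ = ‖(1 : ℂ)‖ - ‖q ^ (i + 1)‖ := by rw [norm_one, norm_pow]
    _ ≤ ‖1 - q ^ (i + 1)‖ := norm_sub_norm_le _ _

lemma one_sub_pow_succ_ne_zero (hq : ‖q‖ < 1) (i : ℕ) : 1 - q ^ (i + 1) ≠ 0 :=
  norm_pos_iff.mp <| (sub_pos.mpr hq).trans_le (one_sub_norm_le_norm_one_sub_pow_succ hq i)

@[simp] lemma coeff_zero : coeff q 0 = 1 := by simp [coeff]

lemma coeff_succ_mul (hq : ‖q‖ < 1) (n : ℕ) :
    coeff q (n + 1) * (1 - q ^ (n + 1)) = coeff q n * q ^ n := by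
  rw [coeff, coeff, Finset.prod_range_succ, Nat.choose_succ_succ', Nat.choose_one_right,
    add_comm n, pow_add]
  field_simp [one_sub_pow_succ_ne_zero hq n]

lemma summable_norm_coeff_mul_pow (hq : ‖q‖ < 1) (w : ℂ) :
    Summable fun j => ‖coeff q j * w ^ j‖ := by
  set δ := 1 - ‖q‖
  have hδ : 0 < δ := sub_pos.mpr hq
  -- the ratio of consecutive terms is `q ^ j * w / (1 - q ^ (j + 1)) → 0`
  have hratio : ∀ j, ‖coeff q (j + 1) * w ^ (j + 1)‖ * δ ≤
      ‖q‖ ^ j * ‖w‖ * ‖coeff q j * w ^ j‖ := fun j =>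
    calc ‖coeff q (j + 1) * w ^ (j + 1)‖ * δ
        ≤ ‖coeff q (j + 1) * w ^ (j + 1)‖ * ‖1 - q ^ (j + 1)‖ := by
          gcongr; exact one_sub_norm_le_norm_one_sub_pow_succ hq j
      _ = ‖coeff q j * w ^ j * (q ^ j * w)‖ := by
          rw [← norm_mul, mul_right_comm, coeff_succ_mul hq]
          congr 1; ring
      _ = ‖q‖ ^ j * ‖w‖ * ‖coeff q j * w ^ j‖ := by
          simp only [norm_mul, norm_pow]; ring
  have hsmall : ∀ᶠ j in atTop, ‖q‖ ^ j * ‖w‖ ≤ δ / 2 := by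
    have := (tendsto_pow_atTop_nhds_zero_of_lt_one (norm_nonneg q) hq).mul_const ‖w‖
    rw [zero_mul] at this
    exact this.eventually_le_const (half_pos hδ)
  refine summable_of_ratio_norm_eventually_le one_half_lt_one ?_
  filter_upwards [hsmall] with j hj
  rw [norm_norm, norm_norm, ← mul_le_mul_iff_left₀ hδ]
  calc ‖coeff q (j + 1) * w ^ (j + 1)‖ * δ ≤ ‖q‖ ^ j * ‖w‖ * ‖coeff q j * w ^ j‖ := hratio j
    _ ≤ δ / 2 * ‖coeff q j * w ^ j‖ := by gcongr
    _ = 1 / 2 * ‖coeff q j * w ^ j‖ * δ := by ring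

lemma summable_coeff_mul_pow (hq : ‖q‖ < 1) (w : ℂ) : Summable fun j => coeff q j * w ^ j :=
  (summable_norm_coeff_mul_pow hq w).of_norm

lemma series_eq_one_add_mul (hq : ‖q‖ < 1) (w : ℂ) :
    series q w = (1 + w) * series q (q * w) := by
  have hsum := (summable_coeff_mul_pow hq w).sub (summable_coeff_mul_pow hq (q * w))
  suffices series q w - series q (q * w) = w * series q (q * w) by linear_combination this
  calc series q w - series q (q * w)
      = ∑' j, (coeff q j * w ^ j - coeff q j * (q * w) ^ j) :=
        ((summable_coeff_mul_pow hq w).tsum_sub (summable_coeff_mul_pow hq (q * w))).symm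
    _ = ∑' n, (coeff q (n + 1) * w ^ (n + 1) - coeff q (n + 1) * (q * w) ^ (n + 1)) := by
        rw [hsum.tsum_eq_zero_add]; simp
    _ = ∑' n, w * (coeff q n * (q * w) ^ n) := by
        congr 1; ext n
        linear_combination w ^ (n + 1) * coeff_succ_mul hq n
    _ = w * series q (q * w) := tsum_mul_left

lemma series_eq_prod_mul (hq : ‖q‖ < 1) (z : ℂ) (n : ℕ) :
    series q z = (∏ k ∈ Finset.range n, (1 + q ^ k * z)) * series q (q ^ n * z) := by
  induction n with
  | zero => simp
  | succ n ih =>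
    rw [ih, series_eq_one_add_mul hq (q ^ n * z), ← mul_assoc q, ← pow_succ',
      Finset.prod_range_succ]
    ring

lemma continuousOn_series (hq : ‖q‖ < 1) (R : ℝ) :
    ContinuousOn (series q) (Metric.closedBall 0 R) := by
  refine continuousOn_tsum (fun j => by fun_prop) (summable_norm_coeff_mul_pow hq R) ?_
  intro j w hw
  rw [mem_closedBall_zero_iff] at hw
  rw [norm_mul, norm_mul, norm_pow, norm_pow, Complex.norm_real]
  gcongr
  exact hw.trans (Real.le_norm_self R)

lemma tendsto_series_nhds_zero (hq : ‖q‖ < 1) : Tendsto (series q) (𝓝 0) (𝓝 1) := by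
  have hcont := (continuousOn_series hq 1).continuousAt (Metric.closedBall_mem_nhds 0 one_pos)
  simpa [series, zero_pow_eq] using hcont.tendsto

end EulerQ

open EulerQ in
theorem euler_q_identity (q z : ℂ) (hq : ‖q‖ < 1) :
    HasSum
      (fun j : ℕ => q ^ j.choose 2 * z ^ j / ∏ i ∈ Finset.range j, (1 - q ^ (i + 1)))
      (∏' k : ℕ, (1 + q ^ k * z)) := by
  have hprod : Tendsto (fun n => ∏ k ∈ Finset.range n, (1 + q ^ k * z)) atTop
      (𝓝 (∏' k, (1 + q ^ k * z))) :=
    (Complex.multipliable_one_add_of_summable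
      ((summable_geometric_of_norm_lt_one hq).mul_right z)).hasProd.tendsto_prod_nat
  have htail : Tendsto (fun n => series q (q ^ n * z)) atTop (𝓝 1) :=
    (tendsto_series_nhds_zero hq).comp <| by
      simpa using (tendsto_pow_atTop_nhds_zero_of_norm_lt_one hq).mul_const z
  have hseries : series q z = ∏' k, (1 + q ^ k * z) := by
    refine tendsto_nhds_unique (f := fun _ : ℕ => series q z) (l := atTop) tendsto_const_nhds ?_
    simpa [← series_eq_prod_mul hq] using hprod.mul htail
  rw [← hseries]
  convert (summable_coeff_mul_pow hq z).hasSum using 2 with j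
  · rw [coeff, div_mul_eq_mul_div, mul_div_right_comm]
  · rfl
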